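/- Let α ∈ ℝ with 0 < |α| < 1/2, and define m₀(u) = √(2π)·2^{α+iu}·Γ(1/4+(α+iu)/2)/Γ(1/4−(α+iu)/2). Then |m₀(u)| → ∞ as u → +∞ when α > 0; in particular |m₀| is not a periodic function of u. -/

import Mathlib

/-!
Since `Γ(z̄) = conj Γ(z)`, `|m₀(u)| = √(2π) 2^α |Γ(b + α + iu/2)| / |Γ(b + iu/2)|` with
`b = 1/4 - α/2 > 0`. Euler's identity `Γ(w) Γ(α) = Γ(w + α) B(w, α)` turns this ratio into
`Γ(α) / |B(b + it, α)|`, and the substitution `x = e^{-s}` exhibits `t ↦ B(b + it, α)` as a Fourier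
transform, which tends to `0` by the Riemann–Lebesgue lemma. For `α < 0` the same argument gives
`|m₀| → 0`. A periodic function with a limit at `+∞` is constantly equal to it, which is impossible
both for the limit `∞` and for the limit `0` of the nowhere vanishing `|m₀|`.
-/

/-- The Mellin multiplier m₀. -/
noncomputable def mZero (α u : ℝ) : ℂ :=
  (Real.sqrt (2 * Real.pi) : ℂ) * (2 : ℂ) ^ ((α : ℂ) + Complex.I * u) *
    Complex.Gamma (1/4 + ((α : ℂ) + Complex.I * u) / 2) /
    Complex.Gamma (1/4 - ((α : ℂ) + Complex.I * u) / 2)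

open Complex ComplexConjugate Filter MeasureTheory Real Set Topology

theorem Function.Periodic.tendsto_const_of_tendsto_atTop {α : Type*} {f : ℝ → α} {p : ℝ}
    (hf : Function.Periodic f p) (hp : p ≠ 0) {l : Filter α} (h : Tendsto f atTop l) (x : ℝ) :
    Tendsto (fun _ : ℕ => f x) atTop l := by
  have habs : Function.Periodic f |p| := by
    rcases abs_choice p with hq | hq <;> rw [hq]
    exacts [hf, hf.neg]
  have hshift : Tendsto (fun n : ℕ => x + n * |p|) atTop atTop :=
    tendsto_atTop_add_const_left _ _
      (tendsto_natCast_atTop_atTop.atTop_mul_const (abs_pos.mpr hp))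
  refine (h.comp hshift).congr fun n => ?_
  simpa [add_comm] using (habs.nat_mul n) x

theorem tendsto_div_const_cocompact {c : ℝ} (hc : c ≠ 0) :
    Tendsto (fun u : ℝ => u / c) (cocompact ℝ) (cocompact ℝ) :=
  ((Homeomorph.mulRight₀ c⁻¹ (inv_ne_zero hc)).isClosedEmbedding.tendsto_cocompact).congr
    fun u => (div_eq_mul_inv u c).symm

namespace Complex

theorem betaIntegral_eq_integral_Ioi (u v : ℂ) :
    betaIntegral u v =
      ∫ s in Ioi (0 : ℝ), cexp (-(s * u)) * (1 - (rexp (-s) : ℂ)) ^ (v - 1) := by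
  have himage : Ioo (0 : ℝ) 1 = (fun s : ℝ => rexp (-s)) '' Ioi 0 := by
    ext x
    constructor
    · rintro ⟨hx0, hx1⟩
      exact ⟨-Real.log x, by simpa using Real.log_neg hx0 hx1, by simp [Real.exp_log hx0]⟩
    · rintro ⟨s, hs, rfl⟩
      exact ⟨Real.exp_pos _, Real.exp_lt_one_iff.mpr (by simpa using hs)⟩
  have hderiv : ∀ s ∈ Ioi (0 : ℝ),
      HasDerivWithinAt (fun s : ℝ => rexp (-s)) (-rexp (-s)) (Ioi 0) s := fun s _ => by
    simpa using (hasDerivAt_neg s).exp.hasDerivWithinAt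
  have hinj : InjOn (fun s : ℝ => rexp (-s)) (Ioi 0) := fun x _ y _ h => by
    simpa using Real.exp_injective h
  rw [betaIntegral, intervalIntegral.integral_of_le zero_le_one, integral_Ioc_eq_integral_Ioo,
    himage, integral_image_eq_integral_abs_deriv_smul measurableSet_Ioi hderiv hinj]
  refine setIntegral_congr_fun measurableSet_Ioi fun s _ => ?_
  have hcpow : ∀ w : ℂ, ((rexp (-s) : ℝ) : ℂ) ^ w = cexp (-s * w) := fun w => by
    rw [ofReal_exp, cpow_def_of_ne_zero (Complex.exp_ne_zero _), Complex.log_exp] <;>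
      simp [Real.pi_pos, Real.pi_pos.le]
  simp only [abs_neg, abs_of_pos (Real.exp_pos _), real_smul, hcpow]
  rw [ofReal_exp, ← mul_assoc, ← Complex.exp_add]
  congr 2
  push_cast
  ring

theorem tendsto_betaIntegral_cocompact (b : ℝ) (v : ℂ) :
    Tendsto (fun t : ℝ => betaIntegral (b + I * t) v) (cocompact ℝ) (𝓝 0) := by
  set g : ℝ → ℂ :=
    (Ioi (0 : ℝ)).indicator fun s => cexp (-(s * b)) * (1 - (rexp (-s) : ℂ)) ^ (v - 1)
  have hscale : Tendsto (fun t : ℝ => (2 * π)⁻¹ * t) (cocompact ℝ) (cocompact ℝ) :=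
    (Homeomorph.mulLeft₀ _ (by positivity)).isClosedEmbedding.tendsto_cocompact
  refine ((Real.tendsto_integral_exp_smul_cocompact g).comp hscale).congr fun t => ?_
  rw [betaIntegral_eq_integral_Ioi, ← integral_indicator measurableSet_Ioi]
  refine integral_congr_ae (Eventually.of_forall fun s => ?_)
  by_cases hs : s ∈ Ioi (0 : ℝ)
  · simp only [g, indicator_of_mem hs, Circle.smul_def, Real.fourierChar_apply, smul_eq_mul,
      ← mul_assoc, ← Complex.exp_add]
    congr 2
    push_cast
    field_simp
    ring
  · simp [g, indicator_of_notMem hs]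

theorem betaIntegral_ne_zero {u v : ℂ} (hu : 0 < u.re) (hv : 0 < v.re) :
    betaIntegral u v ≠ 0 :=
  right_ne_zero_of_mul <| Gamma_mul_Gamma_eq_betaIntegral hu hv ▸
    mul_ne_zero (Gamma_ne_zero_of_re_pos hu) (Gamma_ne_zero_of_re_pos hv)

theorem norm_Gamma_add_div_norm_Gamma {u v : ℂ} (hu : 0 < u.re) (hv : 0 < v.re) :
    ‖Gamma (u + v)‖ / ‖Gamma u‖ = ‖Gamma v‖ / ‖betaIntegral u v‖ := by
  rw [div_eq_div_iff (by simpa using Gamma_ne_zero_of_re_pos hu)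
    (by simpa using betaIntegral_ne_zero hu hv), ← norm_mul, ← norm_mul, mul_comm (Gamma v),
    Gamma_mul_Gamma_eq_betaIntegral hu hv]

theorem tendsto_norm_Gamma_add_div_norm_Gamma_cocompact {b : ℝ} (hb : 0 < b) {v : ℂ}
    (hv : 0 < v.re) :
    Tendsto (fun t : ℝ => ‖Gamma (b + I * t + v)‖ / ‖Gamma (b + I * t)‖) (cocompact ℝ) atTop := by
  have hre : ∀ t : ℝ, 0 < (b + I * t : ℂ).re := fun t => by simpa using hb
  have hB : Tendsto (fun t : ℝ => ‖betaIntegral (b + I * t) v‖) (cocompact ℝ) (𝓝[>] 0) :=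
    tendsto_nhdsWithin_of_tendsto_nhds_of_eventually_within _
      (by simpa using (tendsto_betaIntegral_cocompact b v).norm)
      (Eventually.of_forall fun t => norm_pos_iff.mpr (betaIntegral_ne_zero (hre t) hv))
  refine ((tendsto_inv_nhdsGT_zero.comp hB).const_mul_atTop
    (norm_pos_iff.mpr (Gamma_ne_zero_of_re_pos hv))).congr fun t => ?_
  rw [norm_Gamma_add_div_norm_Gamma (hre t) hv, div_eq_mul_inv]
  rfl

theorem tendsto_norm_Gamma_div_norm_Gamma_cocompact {a b : ℝ} (hb : 0 < b) (hab : b < a) :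
    Tendsto (fun t : ℝ => ‖Gamma (a + I * t)‖ / ‖Gamma (b + I * t)‖) (cocompact ℝ) atTop := by
  refine (tendsto_norm_Gamma_add_div_norm_Gamma_cocompact hb (v := (a - b : ℝ))
    (by simpa using hab)).congr fun t => ?_
  congr 3
  push_cast
  ring

end Complex

theorem norm_mZero (α u : ℝ) :
    ‖mZero α u‖ = √(2 * π) * 2 ^ α *
      (‖Gamma ((1/4 + α/2 : ℝ) + I * (u/2 : ℝ))‖ / ‖Gamma ((1/4 - α/2 : ℝ) + I * (u/2 : ℝ))‖) := by
  have hnum : 1/4 + ((α : ℂ) + I * u) / 2 = (1/4 + α/2 : ℝ) + I * (u/2 : ℝ) := by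
    push_cast; ring
  have hden : 1/4 - ((α : ℂ) + I * u) / 2 = conj ((1/4 - α/2 : ℝ) + I * (u/2 : ℝ)) := by
    simp only [map_add, map_mul, conj_I, conj_ofReal]
    push_cast; ring
  have htwo : ‖(2 : ℂ) ^ ((α : ℂ) + I * u)‖ = 2 ^ α := by
    rw [show (2 : ℂ) = ((2 : ℝ) : ℂ) by norm_num, norm_cpow_eq_rpow_re_of_pos two_pos]
    simp
  rw [mZero, norm_div, norm_mul, norm_mul, htwo, hnum, hden, Gamma_conj, norm_conj, norm_real,
    Real.norm_of_nonneg (Real.sqrt_nonneg _)]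
  ring

theorem tendsto_norm_mZero_cocompact_atTop {α : ℝ} (hα : 0 < α) (hα' : α < 1/2) :
    Tendsto (fun u : ℝ => ‖mZero α u‖) (cocompact ℝ) atTop := by
  have hratio := (tendsto_norm_Gamma_div_norm_Gamma_cocompact (a := 1/4 + α/2) (b := 1/4 - α/2)
    (by linarith) (by linarith)).comp (tendsto_div_const_cocompact two_ne_zero)
  simpa only [norm_mZero, Function.comp_def] using hratio.const_mul_atTop (by positivity)

theorem tendsto_norm_mZero_cocompact_zero {α : ℝ} (hα : -(1/2) < α) (hα' : α < 0) :
    Tendsto (fun u : ℝ => ‖mZero α u‖) (cocompact ℝ) (𝓝 0) := by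
  have hratio := (tendsto_norm_Gamma_div_norm_Gamma_cocompact (a := 1/4 - α/2) (b := 1/4 + α/2)
    (by linarith) (by linarith)).comp (tendsto_div_const_cocompact two_ne_zero)
  simpa only [norm_mZero, Function.comp_def, Pi.inv_apply, inv_div, mul_zero] using
    hratio.inv_tendsto_atTop.const_mul (√(2 * π) * 2 ^ α)

theorem norm_mZero_pos {α : ℝ} (hα : |α| < 1/2) (u : ℝ) : 0 < ‖mZero α u‖ := by
  obtain ⟨hlo, hhi⟩ := abs_lt.mp hα
  have hGamma : ∀ b : ℝ, 0 < b → 0 < ‖Gamma (b + I * (u/2 : ℝ))‖ := fun b hb =>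
    norm_pos_iff.mpr (Gamma_ne_zero_of_re_pos (by simpa using hb))
  have hnum := hGamma (1/4 + α/2) (by linarith)
  have hden := hGamma (1/4 - α/2) (by linarith)
  rw [norm_mZero]
  positivity

/-- When α > 0, |m₀(u)| → ∞ as u → +∞; in particular |m₀| is not periodic. -/
theorem stmt_12 (α : ℝ) (h1 : 0 < |α|) (h2 : |α| < 1/2) :
    (0 < α → Filter.Tendsto (fun u : ℝ => ‖mZero α u‖)
      Filter.atTop Filter.atTop) ∧
    (∀ p : ℝ, p ≠ 0 → ¬ Function.Periodic (fun u : ℝ => ‖mZero α u‖) p) := by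
  obtain ⟨hlo, hhi⟩ := abs_lt.mp h2
  have htop : 0 < α → Tendsto (fun u : ℝ => ‖mZero α u‖) atTop atTop := fun hα =>
    (tendsto_norm_mZero_cocompact_atTop hα hhi).mono_left atTop_le_cocompact
  refine ⟨htop, fun p hp hper => ?_⟩
  rcases (abs_pos.mp h1).lt_or_gt with hα | hα
  · have h0 := hper.tendsto_const_of_tendsto_atTop hp
      ((tendsto_norm_mZero_cocompact_zero hlo hα).mono_left atTop_le_cocompact) 0
    exact (norm_mZero_pos h2 0).ne' (tendsto_const_nhds_iff.mp h0)
  · exact not_tendsto_const_atTop _ _ (hper.tendsto_const_of_tendsto_atTop hp (htop hα) 0)
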